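/- Let Boolean variables ρ_1,…,ρ_n be encoded in Cl(ℝ^{n,n}) by ρ_i ↦ q_i p_i (true) and ¬ρ_i ↦ p_i q_i, with conjunction corresponding to Clifford multiplication. A SAT problem S with clauses C_j, where z_j denotes the product of the complemented literals of C_j (the unique falsifying partial assignment of C_j), is unsatisfiable if and only if ∏_{j=1}^{m} (1 − z_j) = 0 in Cl(ℝ^{n,n}). -/

import Mathlib

set_option linter.unusedSectionVars false
set_option maxHeartbeats 1000000

section Aux

variable {n : ℕ} {A : Type*} [Ring A] [Algebra ℝ A]

/-- Product of commuting idempotents selected by the assignment `a`. -/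
def cliffE (x : Fin n → Bool → A) (a : Fin n → Bool) (L : List (Fin n)) : A :=
  (L.map fun i => x i (a i)).prod

variable (x : Fin n → Bool → A)

theorem cliffE_congr {a b : Fin n → Bool} {L : List (Fin n)}
    (h : ∀ i ∈ L, a i = b i) : cliffE x a L = cliffE x b L := by
  unfold cliffE
  induction L with
  | nil => rfl
  | cons i L ih =>
      simp only [List.map_cons, List.prod_cons]
      rw [h i (List.mem_cons_self), ih fun k hk => h k (List.mem_cons_of_mem _ hk)]

variable (hidem : ∀ i b, x i b * x i b = x i b)
  (horth : ∀ i b c, b ≠ c → x i b * x i c = 0)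
  (hcomm : ∀ i k b c, i ≠ k → x i b * x k c = x k c * x i b)

include hidem horth hcomm in
theorem x_commute (i k : Fin n) (b c : Bool) : Commute (x i b) (x k c) := by
  rcases eq_or_ne i k with rfl | hik
  · rcases eq_or_ne b c with rfl | hbc
    · exact Commute.refl _
    · unfold Commute SemiconjBy
      rw [horth _ _ _ hbc, horth _ _ _ (Ne.symm hbc)]
  · exact hcomm _ _ _ _ hik

include hidem horth hcomm in
theorem x_commute_cliffE (i : Fin n) (b : Bool) (a : Fin n → Bool) (L : List (Fin n)) :
    Commute (x i b) (cliffE x a L) := by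
  refine Commute.list_prod_right _ _ fun y hy => ?_
  obtain ⟨k, _, rfl⟩ := List.mem_map.1 hy
  exact x_commute x hidem horth hcomm i k b (a k)

include hidem horth hcomm in
theorem x_mul_cliffE (i : Fin n) (b : Bool) (a : Fin n → Bool) {L : List (Fin n)}
    (hiL : i ∈ L) :
    x i b * cliffE x a L = if b = a i then cliffE x a L else 0 := by
  induction L with
  | nil => simp at hiL
  | cons k L ih =>
      rcases eq_or_ne i k with rfl | hik
      · unfold cliffE
        simp only [List.map_cons, List.prod_cons, ← mul_assoc]
        rcases eq_or_ne b (a i) with rfl | hb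
        · rw [if_pos rfl, hidem]
        · rw [if_neg hb, horth _ _ _ hb, zero_mul]
      · have hiL' : i ∈ L := by
          rcases List.mem_cons.1 hiL with h | h
          · exact absurd h hik
          · exact h
        unfold cliffE
        simp only [List.map_cons, List.prod_cons, ← mul_assoc]
        rw [hcomm _ _ _ _ hik, mul_assoc]
        rw [show (L.map fun i => x i (a i)).prod = cliffE x a L from rfl]
        rw [ih hiL']
        split
        · rfl
        · rw [mul_zero]

include hidem horth hcomm in
theorem prodIf_mul_cliffE (P : Fin n → Prop) [DecidablePred P] (t : Fin n → Bool)
    (M : List (Fin n)) (a : Fin n → Bool) :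
    ((M.map fun i => if P i then x i (t i) else 1).prod) * cliffE x a (List.finRange n)
      = if ∀ i ∈ M, P i → a i = t i then cliffE x a (List.finRange n) else 0 := by
  induction M with
  | nil => simp
  | cons k M ih =>
      simp only [List.map_cons, List.prod_cons, mul_assoc, ih]
      by_cases hM : ∀ i ∈ M, P i → a i = t i
      · rw [if_pos hM]
        by_cases hk : P k
        · rw [if_pos hk, x_mul_cliffE x hidem horth hcomm k (t k) a (List.mem_finRange k)]
          by_cases hak : a k = t k
          · rw [if_pos hak.symm, if_pos]
            intro i hi hPi
            rcases List.mem_cons.1 hi with rfl | h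
            · exact hak
            · exact hM i h hPi
          · rw [if_neg fun h => hak h.symm, if_neg]
            intro hall
            exact hak (hall k (List.mem_cons_self) hk)
        · rw [if_neg hk, one_mul, if_pos]
          intro i hi hPi
          rcases List.mem_cons.1 hi with rfl | h
          · exact absurd hPi hk
          · exact hM i h hPi
      · rw [if_neg hM, mul_zero, if_neg]
        intro hall
        exact hM fun i hi hPi => hall i (List.mem_cons_of_mem _ hi) hPi

variable (hsum : ∀ i, x i true + x i false = 1)

include hsum in
theorem sum_cliffE {L : List (Fin n)} (hL : L.Nodup) :
    ∑ a : Fin n → Bool, cliffE x a L = ((2 : ℝ) ^ (n - L.length)) • (1 : A) := by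
  induction L with
  | nil =>
      simp only [cliffE, List.map_nil, List.prod_nil]
      rw [Finset.sum_const, Finset.card_univ]
      have hc : Fintype.card (Fin n → Bool) = 2 ^ n := by simp
      rw [hc, ← Nat.cast_smul_eq_nsmul ℝ]
      norm_num
  | cons i L ih =>
      have hi : i ∉ L := (List.nodup_cons.1 hL).1
      have hnd : L.Nodup := (List.nodup_cons.1 hL).2
      have hlen : L.length < n := by
        have := hL.length_le_card
        simpa using this
      have key : ∀ a : Fin n → Bool, cliffE x a (i :: L) = x i (a i) * cliffE x a L := by
        intro a; rfl
      have hinv : Function.Involutive (fun g : Fin n → Bool => Function.update g i (!(g i))) := by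
        intro g
        funext k
        rcases eq_or_ne k i with rfl | hk
        · simp
        · simp [Function.update_of_ne hk]
      let τ : (Fin n → Bool) ≃ (Fin n → Bool) := Function.Involutive.toPerm _ hinv
      have hpair : ∑ a : Fin n → Bool, x i (a i) * cliffE x a L
          = ∑ a : Fin n → Bool, x i (!(a i)) * cliffE x a L := by
        rw [← Equiv.sum_comp τ (fun a => x i (a i) * cliffE x a L)]
        refine Finset.sum_congr rfl fun a _ => ?_
        have h1 : (τ a) i = !(a i) := by simp [τ, Function.Involutive.toPerm]
        have h2 : cliffE x (τ a) L = cliffE x a L := by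
          refine cliffE_congr x fun k hk => ?_
          have : k ≠ i := fun h => hi (h ▸ hk)
          simp [τ, Function.Involutive.toPerm, Function.update_of_ne this]
        rw [h1, h2]
      have hdouble : (2 : ℝ) • (∑ a : Fin n → Bool, cliffE x a (i :: L))
          = ∑ a : Fin n → Bool, cliffE x a L := by
        have : (2 : ℝ) • (∑ a : Fin n → Bool, cliffE x a (i :: L))
            = (∑ a : Fin n → Bool, x i (a i) * cliffE x a L)
              + ∑ a : Fin n → Bool, x i (!(a i)) * cliffE x a L := by
          rw [← hpair, two_smul]
          simp only [key]
        rw [this, ← Finset.sum_add_distrib]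
        refine Finset.sum_congr rfl fun a _ => ?_
        rw [← add_mul]
        have : x i (a i) + x i (!(a i)) = 1 := by
          cases h : a i
          · rw [add_comm]; exact hsum i
          · exact hsum i
        rw [this, one_mul]
      have := ih hnd
      rw [this] at hdouble
      have h2 : (2 : ℝ) • (((2 : ℝ) ^ (n - (i :: L).length)) • (1 : A))
          = ((2 : ℝ) ^ (n - L.length)) • (1 : A) := by
        rw [smul_smul]
        congr 1
        rw [List.length_cons, ← pow_succ']
        congr 1
        omega
      have := hdouble.trans h2.symm
      exact smul_right_injective A (two_ne_zero) this

end Aux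

section Half
variable {A : Type*} [Ring A] [Algebra ℝ A]

theorem half_idem (v : A) (hv : v * v = 1) :
    ((2:ℝ)⁻¹ • (1 + v)) * ((2:ℝ)⁻¹ • (1 + v)) = (2:ℝ)⁻¹ • (1 + v) := by
  rw [smul_mul_smul_comm]
  have h : (1 + v) * (1 + v) = (2:ℝ) • (1 + v) := by
    have : (1 + v) * (1 + v) = 1 + v + v + v * v := by noncomm_ring
    rw [this, hv, two_smul]
    abel
  rw [h, smul_smul]
  norm_num

theorem half_orth (v : A) (hv : v * v = 1) :
    ((2:ℝ)⁻¹ • (1 + v)) * ((2:ℝ)⁻¹ • (1 + -v)) = 0 := by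
  rw [smul_mul_smul_comm]
  have h : (1 + v) * (1 + -v) = 1 - v * v := by noncomm_ring
  rw [h, hv, sub_self, smul_zero]

theorem half_comm (v w : A) (hvw : v * w = w * v) :
    ((2:ℝ)⁻¹ • (1 + v)) * ((2:ℝ)⁻¹ • (1 + w)) = ((2:ℝ)⁻¹ • (1 + w)) * ((2:ℝ)⁻¹ • (1 + v)) := by
  rw [smul_mul_smul_comm, smul_mul_smul_comm]
  congr 1
  have h1 : (1 + v) * (1 + w) = 1 + v + w + v * w := by noncomm_ring
  have h2 : (1 + w) * (1 + v) = 1 + v + w + w * v := by noncomm_ring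
  rw [h1, h2, hvw]

theorem half_sum (v : A) :
    ((2:ℝ)⁻¹ • (1 + v)) + ((2:ℝ)⁻¹ • (1 + -v)) = 1 := by
  rw [← smul_add]
  have : (1 + v) + (1 + -v) = (2:ℝ) • (1 : A) := by
    rw [two_smul]; abel
  rw [this, smul_smul]
  norm_num

theorem anticomm_sq {a b : A} (ha : a * a = 1) (hb : b * b = -1) (hab : a * b = -(b * a)) :
    (a * b) * (a * b) = 1 := by
  have hba : b * a = -(a * b) := by rw [hab, neg_neg]
  calc (a * b) * (a * b) = a * (b * a) * b := by noncomm_ring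
    _ = a * (-(a * b)) * b := by rw [hba]
    _ = -((a * a) * (b * b)) := by noncomm_ring
    _ = 1 := by rw [ha, hb]; norm_num

theorem comm4 (a b c d : A) (hac : a * c = -(c * a)) (had : a * d = -(d * a))
    (hbc : b * c = -(c * b)) (hbd : b * d = -(d * b)) :
    (a * b) * (c * d) = (c * d) * (a * b) := by
  calc (a * b) * (c * d) = a * (b * c) * d := by noncomm_ring
    _ = a * (-(c * b)) * d := by rw [hbc]
    _ = -(a * c * (b * d)) := by noncomm_ring
    _ = -(a * c * (-(d * b))) := by rw [hbd]
    _ = (a * c) * (d * b) := by noncomm_ring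
    _ = (-(c * a)) * (d * b) := by rw [hac]
    _ = -(c * (a * d) * b) := by noncomm_ring
    _ = -(c * (-(d * a)) * b) := by rw [had]
    _ = (c * d) * (a * b) := by noncomm_ring

end Half

theorem genQ {N : ℕ} (Q : QuadraticMap ℝ (Fin N → ℝ) ℝ)
    (hQ : Q = QuadraticMap.weightedSumSquares ℝ (fun i : Fin N => (-1 : ℝ) ^ (i : ℕ)))
    (k : Fin N) : Q (Pi.single k 1) = (-1 : ℝ) ^ (k : ℕ) := by
  subst hQ
  rw [QuadraticMap.weightedSumSquares_apply]
  rw [Finset.sum_eq_single k]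
  · simp
  · intro i _ hik
    simp [Pi.single_apply, Ne.symm hik]
  · simp

theorem genOrtho {N : ℕ} (Q : QuadraticMap ℝ (Fin N → ℝ) ℝ)
    (hQ : Q = QuadraticMap.weightedSumSquares ℝ (fun i : Fin N => (-1 : ℝ) ^ (i : ℕ)))
    {k l : Fin N} (hkl : k ≠ l) :
    Q.IsOrtho (Pi.single k 1) (Pi.single l 1) := by
  rw [QuadraticMap.isOrtho_def, genQ Q hQ, genQ Q hQ, hQ]
  rw [QuadraticMap.weightedSumSquares_apply]
  have : ∀ i : Fin N, (-1 : ℝ) ^ (i : ℕ) • (((Pi.single k 1 + Pi.single l 1 : Fin N → ℝ)) i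
      * ((Pi.single k 1 + Pi.single l 1 : Fin N → ℝ)) i)
      = (if i = k then (-1:ℝ)^(k:ℕ) else 0) + (if i = l then (-1:ℝ)^(l:ℕ) else 0) := by
    intro i
    rcases eq_or_ne i k with rfl | hik
    · simp [Pi.single_apply, Ne.symm hkl, hkl]
    · rcases eq_or_ne i l with rfl | hil
      · simp [Pi.single_apply, Ne.symm hkl, hik, Ne.symm hik]
      · simp [Pi.single_apply, Ne.symm hik, Ne.symm hil, hik, hil]
  rw [Finset.sum_congr rfl fun i _ => this i, Finset.sum_add_distrib]
  simp

/-- anticommutation of distinct generators -/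
theorem genAnti {N : ℕ} (Q : QuadraticMap ℝ (Fin N → ℝ) ℝ)
    (hQ : Q = QuadraticMap.weightedSumSquares ℝ (fun i : Fin N => (-1 : ℝ) ^ (i : ℕ)))
    {k l : Fin N} (hkl : k ≠ l) :
    CliffordAlgebra.ι Q (Pi.single k 1) * CliffordAlgebra.ι Q (Pi.single l 1)
      = -(CliffordAlgebra.ι Q (Pi.single l 1) * CliffordAlgebra.ι Q (Pi.single k 1)) := by
  have h := CliffordAlgebra.ι_mul_ι_add_swap_of_isOrtho (Q := Q) (genOrtho Q hQ hkl)
  exact eq_neg_of_add_eq_zero_left h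

/-- Encode Boolean variables in `Cl(ℝ^{n,n})` by `ρ i ↦ q i * p i` (true) and
`¬ρ i ↦ p i * q i`, conjunction being Clifford multiplication.  A SAT problem with
clauses given by variable sets `J j` and falsifying signs `s j` (so
`z j = ∏_{i ∈ J j} (literal corresponding to the negation)`) is unsatisfiable
(every assignment `a` falsifies some clause, i.e. agrees with `s j` on `J j`)
iff `∏_{j} (1 - z j) = 0` in the Clifford algebra. -/
theorem stmt5 (n m : ℕ)
    (Q : QuadraticMap ℝ (Fin (2 * n) → ℝ) ℝ)
    (hQ : Q = QuadraticMap.weightedSumSquares ℝ (fun i : Fin (2 * n) => (-1 : ℝ) ^ (i : ℕ)))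
    (p q : Fin n → CliffordAlgebra Q)
    (hp : ∀ i : Fin n, p i = (2 : ℝ)⁻¹ •
      (CliffordAlgebra.ι Q (Pi.single ⟨2 * i, by have := i.isLt; omega⟩ 1) +
       CliffordAlgebra.ι Q (Pi.single ⟨2 * i + 1, by have := i.isLt; omega⟩ 1)))
    (hq : ∀ i : Fin n, q i = (2 : ℝ)⁻¹ •
      (CliffordAlgebra.ι Q (Pi.single ⟨2 * i, by have := i.isLt; omega⟩ 1) -
       CliffordAlgebra.ι Q (Pi.single ⟨2 * i + 1, by have := i.isLt; omega⟩ 1)))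
    (J : Fin m → Finset (Fin n)) (hJ : ∀ j, (J j).Nonempty)
    (s : Fin m → Fin n → Bool)
    (z : Fin m → CliffordAlgebra Q)
    (hz : ∀ j, z j = ((List.finRange n).map (fun i =>
      if i ∈ J j then (if s j i then q i * p i else p i * q i) else 1)).prod) :
    (∀ a : Fin n → Bool, ∃ j, ∀ i ∈ J j, a i = s j i) ↔
      ((List.finRange m).map (fun j => 1 - z j)).prod = 0 := by
  classical
  -- index embeddings and generators
  set idx1 : Fin n → Fin (2 * n) := fun i => ⟨2 * i, by have := i.isLt; omega⟩ with hidx1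
  set idx2 : Fin n → Fin (2 * n) := fun i => ⟨2 * i + 1, by have := i.isLt; omega⟩ with hidx2
  set E : Fin n → CliffordAlgebra Q := fun i => CliffordAlgebra.ι Q (Pi.single (idx1 i) 1)
    with hE
  set F : Fin n → CliffordAlgebra Q := fun i => CliffordAlgebra.ι Q (Pi.single (idx2 i) 1)
    with hF
  have hpEF : ∀ i, p i = (2 : ℝ)⁻¹ • (E i + F i) := hp
  have hqEF : ∀ i, q i = (2 : ℝ)⁻¹ • (E i - F i) := hq
  -- distinctness of indices
  have hne12 : ∀ i k : Fin n, idx1 i ≠ idx2 k := by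
    intro i k
    refine Fin.ne_of_val_ne ?_
    show 2 * (i : ℕ) ≠ 2 * (k : ℕ) + 1
    omega
  have hne21 : ∀ i k : Fin n, idx2 i ≠ idx1 k := fun i k => (hne12 k i).symm
  have hne11 : ∀ i k : Fin n, i ≠ k → idx1 i ≠ idx1 k := by
    intro i k hik
    have : (i : ℕ) ≠ (k : ℕ) := fun h => hik (Fin.ext h)
    refine Fin.ne_of_val_ne ?_
    show 2 * (i : ℕ) ≠ 2 * (k : ℕ)
    omega
  have hne22 : ∀ i k : Fin n, i ≠ k → idx2 i ≠ idx2 k := by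
    intro i k hik
    have : (i : ℕ) ≠ (k : ℕ) := fun h => hik (Fin.ext h)
    refine Fin.ne_of_val_ne ?_
    show 2 * (i : ℕ) + 1 ≠ 2 * (k : ℕ) + 1
    omega
  -- squares of generators
  have hE2 : ∀ i, E i * E i = 1 := by
    intro i
    rw [hE]
    dsimp only
    rw [CliffordAlgebra.ι_sq_scalar, genQ Q hQ]
    have : ((idx1 i : ℕ)) = 2 * (i : ℕ) := rfl
    rw [this, pow_mul]
    norm_num
  have hF2 : ∀ i, F i * F i = -1 := by
    intro i
    rw [hF]
    dsimp only
    rw [CliffordAlgebra.ι_sq_scalar, genQ Q hQ]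
    have : ((idx2 i : ℕ)) = 2 * (i : ℕ) + 1 := rfl
    rw [this, pow_succ, pow_mul]
    norm_num
  have hFE : ∀ i, F i * E i = -(E i * F i) := by
    intro i
    rw [hE, hF]
    exact genAnti Q hQ (hne21 i i)
  -- the commuting involutions u i = E i * F i
    -- (products of two generators)
  have hu2 : ∀ i, (E i * F i) * (E i * F i) = 1 := by
    intro i
    refine anticomm_sq (hE2 i) (hF2 i) ?_
    rw [hE, hF]
    exact genAnti Q hQ (hne12 i i)
  have huc : ∀ i k, i ≠ k → (E i * F i) * (E k * F k) = (E k * F k) * (E i * F i) := by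
    intro i k hik
    refine comm4 _ _ _ _ ?_ ?_ ?_ ?_
    · rw [hE]; exact genAnti Q hQ (hne11 i k hik)
    · rw [hE, hF]; exact genAnti Q hQ (hne12 i k)
    · rw [hE, hF]; exact genAnti Q hQ (hne21 i k)
    · rw [hF]; exact genAnti Q hQ (hne22 i k hik)
  -- products q*p and p*q
  have hqp : ∀ i, q i * p i = (2 : ℝ)⁻¹ • (1 + E i * F i) := by
    intro i
    rw [hqEF i, hpEF i, smul_mul_smul_comm]
    have hexp : (E i - F i) * (E i + F i)
        = E i * E i + (E i * F i - F i * E i) - F i * F i := by noncomm_ring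
    have h2 : (E i - F i) * (E i + F i) = (2 : ℝ) • (1 + E i * F i) := by
      rw [hexp, hE2 i, hF2 i, hFE i, two_smul]
      abel
    rw [h2, smul_smul]
    norm_num
  have hpq : ∀ i, p i * q i = (2 : ℝ)⁻¹ • (1 + -(E i * F i)) := by
    intro i
    rw [hqEF i, hpEF i, smul_mul_smul_comm]
    have hexp : (E i + F i) * (E i - F i)
        = E i * E i - (E i * F i - F i * E i) - F i * F i := by noncomm_ring
    have h2 : (E i + F i) * (E i - F i) = (2 : ℝ) • (1 + -(E i * F i)) := by
      rw [hexp, hE2 i, hF2 i, hFE i, two_smul]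
      abel
    rw [h2, smul_smul]
    norm_num
  -- the Boolean idempotents
  set xc : Fin n → Bool → CliffordAlgebra Q :=
    fun i b => if b then q i * p i else p i * q i with hxc
  have hxt : ∀ i, xc i true = (2 : ℝ)⁻¹ • (1 + E i * F i) := by
    intro i
    show q i * p i = _
    rw [hqp i]
  have hxf : ∀ i, xc i false = (2 : ℝ)⁻¹ • (1 + -(E i * F i)) := by
    intro i
    show p i * q i = _
    rw [hpq i]
  have hidem : ∀ i b, xc i b * xc i b = xc i b := by
    intro i b
    cases b
    · rw [hxf]
      exact half_idem _ (by rw [neg_mul_neg]; exact hu2 i)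
    · rw [hxt]
      exact half_idem _ (hu2 i)
  have horth : ∀ i b c, b ≠ c → xc i b * xc i c = 0 := by
    intro i b c hbc
    cases b <;> cases c
    · exact absurd rfl hbc
    · rw [hxf, hxt]
      have := half_orth (-(E i * F i)) (by rw [neg_mul_neg]; exact hu2 i)
      rw [neg_neg] at this
      exact this
    · rw [hxt, hxf]
      exact half_orth _ (hu2 i)
    · exact absurd rfl hbc
  have hcommx : ∀ i k b c, i ≠ k → xc i b * xc k c = xc k c * xc i b := by
    intro i k b c hik
    have hbase := huc i k hik
    cases b <;> cases c
    · rw [hxf, hxf]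
      exact half_comm _ _ (by rw [neg_mul, mul_neg, neg_mul, mul_neg, hbase])
    · rw [hxf, hxt]
      exact half_comm _ _ (by rw [neg_mul, mul_neg, hbase])
    · rw [hxt, hxf]
      exact half_comm _ _ (by rw [neg_mul, mul_neg, hbase])
    · rw [hxt, hxt]
      exact half_comm _ _ hbase
  have hsumx : ∀ i, xc i true + xc i false = 1 := by
    intro i
    rw [hxt, hxf]
    exact half_sum _
  -- relating z to the idempotent products
  have hzj : ∀ j, z j = ((List.finRange n).map fun i =>
      if i ∈ J j then xc i (s j i) else 1).prod := by
    intro j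
    rw [hz j]
  have hzmul : ∀ j a, z j * cliffE xc a (List.finRange n)
      = if (∀ i ∈ J j, a i = s j i) then cliffE xc a (List.finRange n) else 0 := by
    intro j a
    rw [hzj j, prodIf_mul_cliffE xc hidem horth hcommx (fun i => i ∈ J j) (s j)
      (List.finRange n) a]
    refine if_congr ?_ rfl rfl
    simp
  have hcommze : ∀ j a, Commute (z j) (cliffE xc a (List.finRange n)) := by
    intro j a
    rw [hzj j]
    refine Commute.list_prod_left _ _ fun y hy => ?_
    obtain ⟨i, _, rfl⟩ := List.mem_map.1 hy
    by_cases hi : i ∈ J j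
    · rw [if_pos hi]
      exact x_commute_cliffE xc hidem horth hcommx i (s j i) a (List.finRange n)
    · rw [if_neg hi]
      exact Commute.one_left _
  have hezmul : ∀ j a, cliffE xc a (List.finRange n) * z j
      = if (∀ i ∈ J j, a i = s j i) then cliffE xc a (List.finRange n) else 0 := by
    intro j a
    rw [← (hcommze j a).eq, hzmul]
  -- products over clauses
  have hprodmul : ∀ (N : List (Fin m)) a,
      ((N.map fun j => 1 - z j).prod) * cliffE xc a (List.finRange n)
      = if (∀ j ∈ N, ¬ (∀ i ∈ J j, a i = s j i)) then cliffE xc a (List.finRange n) else 0 := by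
    intro N a
    induction N with
    | nil => simp
    | cons j N ih =>
        rw [List.map_cons, List.prod_cons, mul_assoc, ih]
        by_cases hN : ∀ k ∈ N, ¬(∀ i ∈ J k, a i = s k i)
        · rw [if_pos hN, sub_mul, one_mul, hzmul j a]
          by_cases hj : ∀ i ∈ J j, a i = s j i
          · rw [if_pos hj, sub_self, if_neg]
            intro hall
            exact (hall j (List.mem_cons_self)) hj
          · rw [if_neg hj, sub_zero, if_pos]
            intro k hk
            rcases List.mem_cons.1 hk with rfl | h
            · exact hj
            · exact hN k h
        · rw [if_neg hN, mul_zero, if_neg]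
          intro hall
          exact hN fun k hk => hall k (List.mem_cons_of_mem _ hk)
  have heprod : ∀ (N : List (Fin m)) a,
      (∀ j ∈ N, ¬ (∀ i ∈ J j, a i = s j i)) →
      cliffE xc a (List.finRange n) * ((N.map fun j => 1 - z j).prod)
        = cliffE xc a (List.finRange n) := by
    intro N a
    induction N with
    | nil => intro _; simp
    | cons j N ih =>
        intro hN
        rw [List.map_cons, List.prod_cons, ← mul_assoc, mul_sub, mul_one, hezmul j a,
          if_neg (hN j (List.mem_cons_self)), sub_zero]
        exact ih fun k hk => hN k (List.mem_cons_of_mem _ hk)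
  -- resolution of the identity
  have hsume : ∑ a : Fin n → Bool, cliffE xc a (List.finRange n) = 1 := by
    rw [sum_cliffE xc hsumx (List.nodup_finRange n)]
    simp
  -- nontriviality
  letI : Invertible (2 : ℝ) := invertibleOfNonzero two_ne_zero
  haveI : Nontrivial (CliffordAlgebra Q) := inferInstance
  -- the flip automorphism
  have hflip : ∀ a b : Fin n → Bool, cliffE xc a (List.finRange n) = 0 →
      cliffE xc b (List.finRange n) = 0 := by
    intro a b hab
    set σ : Fin (2 * n) → ℝ := fun k =>
      if k.1 % 2 = 1 ∧ a ⟨k.1 / 2, by have := k.isLt; omega⟩ ≠ b ⟨k.1 / 2, by have := k.isLt; omega⟩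
      then -1 else 1 with hσ
    have hσsq : ∀ k, σ k * σ k = 1 := by
      intro k
      rw [hσ]
      dsimp only
      split <;> norm_num
    let g : (Fin (2 * n) → ℝ) →ₗ[ℝ] (Fin (2 * n) → ℝ) :=
      LinearMap.pi fun k => σ k • LinearMap.proj k
    have hg : ∀ (v : Fin (2 * n) → ℝ) k, g v k = σ k * v k := fun v k => rfl
    have hgQ : ∀ v, Q (g v) = Q v := by
      intro v
      conv_lhs => rw [hQ, QuadraticMap.weightedSumSquares_apply]
      conv_rhs => rw [hQ, QuadraticMap.weightedSumSquares_apply]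
      refine Finset.sum_congr rfl fun k _ => ?_
      rw [hg]
      congr 1
      calc σ k * v k * (σ k * v k) = (σ k * σ k) * (v k * v k) := by ring
        _ = v k * v k := by rw [hσsq k, one_mul]
    let f : Q →qᵢ Q := ⟨g, hgQ⟩
    let φ := CliffordAlgebra.map f
    have hφι : ∀ v, φ (CliffordAlgebra.ι Q v) = CliffordAlgebra.ι Q (g v) :=
      fun v => CliffordAlgebra.map_apply_ι f v
    have hgsingle : ∀ k : Fin (2 * n), g (Pi.single k 1) = σ k • (Pi.single k 1 : Fin (2 * n) → ℝ) := by
      intro k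
      funext l
      rw [hg]
      rcases eq_or_ne l k with rfl | hlk
      · simp
      · simp [Pi.single_eq_of_ne hlk]
    have hφG : ∀ k : Fin (2 * n), φ (CliffordAlgebra.ι Q (Pi.single k 1))
        = σ k • CliffordAlgebra.ι Q (Pi.single k 1) := by
      intro k
      rw [hφι, hgsingle, map_smul]
    have hσE : ∀ i : Fin n, σ (idx1 i) = 1 := by
      intro i
      rw [hσ]
      dsimp only
      rw [if_neg]
      rintro ⟨h1, -⟩
      have h1' : ((idx1 i : ℕ)) = 2 * (i : ℕ) := rfl
      omega
    have hσF : ∀ i : Fin n, σ (idx2 i) = if a i = b i then 1 else -1 := by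
      intro i
      rw [hσ, hidx2]
      simp only [show (2 * (i : ℕ) + 1) % 2 = 1 from by omega,
        show (2 * (i : ℕ) + 1) / 2 = (i : ℕ) from by omega, Fin.eta]
      by_cases hab : a i = b i <;> simp [hab]
    have hφp : ∀ i, φ (p i) = if a i = b i then p i else q i := by
      intro i
      rw [hpEF i, map_smul, map_add]
      rw [hE, hF]
      dsimp only
      rw [hφG, hφG, hσE, hσF, one_smul]
      by_cases hab : a i = b i
      · rw [if_pos hab, if_pos hab, one_smul]
      · rw [if_neg hab, if_neg hab, neg_one_smul, hqEF i, hE, hF]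
        dsimp only
        rw [sub_eq_add_neg]
    have hφq : ∀ i, φ (q i) = if a i = b i then q i else p i := by
      intro i
      rw [hqEF i, map_smul, map_sub]
      rw [hE, hF]
      dsimp only
      rw [hφG, hφG, hσE, hσF, one_smul]
      by_cases hab : a i = b i
      · rw [if_pos hab, if_pos hab, one_smul]
      · rw [if_neg hab, if_neg hab, neg_one_smul, hpEF i, hE, hF]
        dsimp only
        rw [sub_neg_eq_add]
    have hφxc : ∀ i, φ (xc i (a i)) = xc i (b i) := by
      intro i
      by_cases hab : a i = b i
      · rw [hab]
        cases hbi : b i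
        · show φ (p i * q i) = p i * q i
          rw [map_mul, hφp, hφq, if_pos hab, if_pos hab]
        · show φ (q i * p i) = q i * p i
          rw [map_mul, hφq, hφp, if_pos hab, if_pos hab]
      · cases hai : a i <;> cases hbi : b i
        · exact absurd (hai.trans hbi.symm) hab
        · show φ (p i * q i) = q i * p i
          rw [map_mul, hφp, hφq, if_neg hab, if_neg hab]
        · show φ (q i * p i) = p i * q i
          rw [map_mul, hφq, hφp, if_neg hab, if_neg hab]
        · exact absurd (hai.trans hbi.symm) hab
    have hφe : φ (cliffE xc a (List.finRange n)) = cliffE xc b (List.finRange n) := by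
      unfold cliffE
      rw [map_list_prod, List.map_map]
      congr 1
      refine List.map_congr_left fun i _ => ?_
      exact hφxc i
    rw [← hφe, hab, map_zero]
  have hex : ∃ a0 : Fin n → Bool, cliffE xc a0 (List.finRange n) ≠ 0 := by
    by_contra hall
    push_neg at hall
    rw [Finset.sum_eq_zero (fun a _ => hall a)] at hsume
    exact one_ne_zero hsume.symm
  have hene : ∀ a, cliffE xc a (List.finRange n) ≠ 0 := by
    obtain ⟨a0, ha0⟩ := hex
    intro a h
    exact ha0 (hflip a a0 h)
  -- final assembly
  constructor
  · intro hunsat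
    calc ((List.finRange m).map (fun j => 1 - z j)).prod
        = ((List.finRange m).map (fun j => 1 - z j)).prod * 1 := (mul_one _).symm
      _ = ((List.finRange m).map (fun j => 1 - z j)).prod
            * ∑ a : Fin n → Bool, cliffE xc a (List.finRange n) := by rw [hsume]
      _ = ∑ a : Fin n → Bool,
            ((List.finRange m).map (fun j => 1 - z j)).prod * cliffE xc a (List.finRange n) :=
          Finset.mul_sum _ _ _
      _ = 0 := by
          refine Finset.sum_eq_zero fun a _ => ?_
          rw [hprodmul (List.finRange m) a, if_neg]
          intro hall
          obtain ⟨j, hj⟩ := hunsat a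
          exact hall j (List.mem_finRange j) hj
  · intro h0 a
    by_contra hno
    have hno' : ∀ j, ¬(∀ i ∈ J j, a i = s j i) := fun j hj => hno ⟨j, hj⟩
    have hthis := heprod (List.finRange m) a (fun j _ => hno' j)
    rw [h0, mul_zero] at hthis
    exact hene a hthis.symm
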